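/- arXiv:2204.04765 — 9 statements merged into one kernel-verified Lean document; each statement's English description precedes it below -/
import Mathlib

section
/- Let G = (V,E) be a finite undirected simple graph and let f : V → {0,1,2} be a minimal Roman dominating function on G. Then N_G[V₂(f)] ∩ V₁(f) = ∅, i.e., no vertex with value 1 lies in the closed neighborhood of a vertex with value 2. -/
variable {V : Type*}

/-- Closed neighborhood N_G[v] of a vertex. -/
def closedNbhd (G : SimpleGraph V) (v : V) : Set V :=
  {w | w = v ∨ G.Adj v w}

/-- Closed neighborhood N_G[U] of a set of vertices. -/
def closedNbhdSet (G : SimpleGraph V) (U : Set V) : Set V :=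
  ⋃ u ∈ U, closedNbhd G u

/-- Private neighborhood of v w.r.t. D in G: N_G[v] \ N_G[D \ {v}]. -/
def privateNbhd (G : SimpleGraph V) (D : Set V) (v : V) : Set V :=
  closedNbhd G v \ closedNbhdSet G (D \ {v})

/-- Closed neighborhood of v in the subgraph of G induced by U. -/
def indClosedNbhd (G : SimpleGraph V) (U : Set V) (v : V) : Set V :=
  {w | v ∈ U ∧ w ∈ U ∧ (w = v ∨ G.Adj v w)}

/-- Private neighborhood of v w.r.t. D inside the subgraph of G induced by U. -/
def indPrivateNbhd (G : SimpleGraph V) (U D : Set V) (v : V) : Set V :=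
  indClosedNbhd G U v \ ⋃ u ∈ D \ {v}, indClosedNbhd G U u

/-- Roman dominating function. -/
def IsRDF (G : SimpleGraph V) (f : V → Fin 3) : Prop :=
  ∀ v, f v = 0 → ∃ u, G.Adj v u ∧ f u = 2

/-- Minimal Roman dominating function (w.r.t. the pointwise order from 0 < 1 < 2). -/
def IsMinimalRDF (G : SimpleGraph V) (f : V → Fin 3) : Prop :=
  IsRDF G f ∧ ∀ g : V → Fin 3, IsRDF G g → (∀ v, g v ≤ f v) → g = f

/-- D is a dominating set of the subgraph of G induced by U. -/
def IsDomSetOn (G : SimpleGraph V) (U D : Set V) : Prop :=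
  D ⊆ U ∧ ∀ w ∈ U, ∃ u ∈ D, w = u ∨ G.Adj u w

/-- D is a minimal dominating set of the subgraph of G induced by U. -/
def IsMinDomSetOn (G : SimpleGraph V) (U D : Set V) : Prop :=
  IsDomSetOn G U D ∧ ∀ D' : Set V, D' ⊂ D → ¬ IsDomSetOn G U D'

theorem stmt_0 [Fintype V] (G : SimpleGraph V) (f : V → Fin 3)
    (hf : IsMinimalRDF G f) :
    closedNbhdSet G {v | f v = 2} ∩ {v | f v = 1} = ∅ := by
  classical
  ext w
  simp only [Set.mem_inter_iff, Set.mem_empty_iff_false, iff_false]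
  rintro ⟨hw2, hw1⟩
  simp only [closedNbhdSet, Set.mem_iUnion, closedNbhd, Set.mem_setOf_eq] at hw2 hw1
  obtain ⟨u, hu2, hwu⟩ := hw2
  have huw : G.Adj u w := by
    rcases hwu with h | h
    · subst h; rw [hw1] at hu2; exact absurd hu2 (by decide)
    · exact h
  set g : V → Fin 3 := fun v => if v = w then 0 else f v with hg
  have hgrdf : IsRDF G g := by
    intro v hv
    by_cases hvw : v = w
    · subst hvw
      refine ⟨u, huw.symm, ?_⟩
      have : u ≠ v := fun h => by rw [h, hw1] at hu2; exact absurd hu2 (by decide)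
      simp [hg, this, hu2]
    · have hfv : f v = 0 := by simpa [hg, hvw] using hv
      obtain ⟨u', hadj, hu'⟩ := hf.1 v hfv
      have : u' ≠ w := fun h => by rw [h, hw1] at hu'; exact absurd hu' (by decide)
      exact ⟨u', hadj, by simp [hg, this, hu']⟩
  have hle : ∀ v, g v ≤ f v := by
    intro v
    by_cases hvw : v = w
    · subst hvw; simp [hg]
    · simp [hg, hvw]
  have := hf.2 g hgrdf hle
  have : g w = f w := by rw [this]
  simp [hg, hw1] at this
end

section
/- Let G = (V,E) be a finite undirected simple graph and let f : V → {0,1,2} be a minimal Roman dominating function on G. Then for every v ∈ V₂(f), the private neighborhood of v with respect to V₂(f) in the induced subgraph G[V₀(f) ∪ V₂(f)] is not contained in {v}; that is, P_{G', V₂(f)}(v) ⊄ {v} where G' = G[V₀(f) ∪ V₂(f)]. -/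
variable {V : Type*}

theorem stmt_1 [Fintype V] (G : SimpleGraph V) (f : V → Fin 3)
    (hf : IsMinimalRDF G f) :
    ∀ v, f v = 2 →
      ¬ indPrivateNbhd G ({w | f w = 0} ∪ {w | f w = 2}) {w | f w = 2} v ⊆ {v} := by
  classical
  intro v hv hsub
  set U : Set V := {w | f w = 0} ∪ {w | f w = 2} with hU
  set g : V → Fin 3 := fun w => if w = v then 1 else f w with hg
  have hgrdf : IsRDF G g := by
    intro w hw
    have hwv : w ≠ v := by
      intro h; subst h; simp [hg] at hw
    have hfw : f w = 0 := by simpa [hg, hwv] using hw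
    obtain ⟨u, hadj, hu⟩ := hf.1 w hfw
    by_cases huv : u = v
    · have hadj' : G.Adj w v := huv ▸ hadj
      have hwU : w ∈ U := Or.inl hfw
      have hvU : v ∈ U := Or.inr hv
      have hwc : w ∈ indClosedNbhd G U v := ⟨hvU, hwU, Or.inr hadj'.symm⟩
      have hnot : w ∉ indPrivateNbhd G U {x | f x = 2} v := by
        intro h; exact hwv (hsub h)
      have : w ∈ ⋃ u ∈ ({x | f x = 2} \ {v} : Set V), indClosedNbhd G U u := by
        by_contra hc
        exact hnot ⟨hwc, hc⟩
      simp only [Set.mem_iUnion] at this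
      obtain ⟨u', ⟨hu'2, hu'v⟩, _, _, hwu'⟩ := this
      have hu'v' : u' ≠ v := hu'v
      have hu'2' : f u' = 2 := hu'2
      rcases hwu' with h | h
      · exfalso; rw [h, hu'2'] at hfw; exact absurd hfw (by decide)
      · exact ⟨u', h.symm, by simp [hg, hu'v', hu'2']⟩
    · exact ⟨u, hadj, by simp [hg, huv, hu]⟩
  have hle : ∀ w, g w ≤ f w := by
    intro w
    by_cases h : w = v
    · subst h; simp [hg, hv]
    · simp [hg, h]
  have := hf.2 g hgrdf hle
  have : g v = f v := congrFun this v
  rw [hv] at this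
  simp [hg] at this
end

section
/- Let G = (V,E) be a finite undirected simple graph and let f : V → {0,1,2} be a minimal Roman dominating function on G. Let V₂ = V₂(f). Then N_G[V₂] = V₀(f) ∪ V₂, and V₂ is a minimal dominating set of the induced subgraph G[N_G[V₂]]. -/
variable {V : Type*}

theorem stmt_2 [Fintype V] (G : SimpleGraph V) (f : V → Fin 3)
    (hf : IsMinimalRDF G f) :
    closedNbhdSet G {v | f v = 2} = {v | f v = 0} ∪ {v | f v = 2} ∧
    IsMinDomSetOn G (closedNbhdSet G {v | f v = 2}) {v | f v = 2} := by
  classical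
  obtain ⟨hrdf, hmin⟩ := hf
  have h3 : ∀ x : Fin 3, x = 0 ∨ x = 1 ∨ x = 2 := by decide
  -- no vertex with value 1 is in N[V₂]
  have key : ∀ v, f v = 1 → v ∉ closedNbhdSet G {v | f v = 2} := by
    intro v hv hvin
    simp only [closedNbhdSet, closedNbhd, Set.mem_iUnion, Set.mem_setOf_eq] at hvin
    obtain ⟨u, hu2, hmem⟩ := hvin
    have hvu : v ≠ u := by intro h; rw [h, hu2] at hv; exact absurd hv (by decide)
    have hadj : G.Adj u v := hmem.resolve_left hvu
    set g : V → Fin 3 := fun w => if w = v then 0 else f w with hgdef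
    have hg : IsRDF G g := by
      intro w hw
      by_cases hwv : w = v
      · subst hwv
        refine ⟨u, hadj.symm, ?_⟩
        simp only [hgdef]
        rw [if_neg (Ne.symm hvu)]
        exact hu2
      · simp only [hgdef, if_neg hwv] at hw
        obtain ⟨u', ha, hu'⟩ := hrdf w hw
        refine ⟨u', ha, ?_⟩
        have hne : u' ≠ v := by intro h; rw [h, hv] at hu'; exact absurd hu' (by decide)
        simp only [hgdef]; rw [if_neg hne]; exact hu'
    have hle : ∀ w, g w ≤ f w := by
      intro w
      by_cases hwv : w = v
      · simp only [hgdef, if_pos hwv]; exact Fin.zero_le _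
      · simp only [hgdef, if_neg hwv]; exact le_refl _
    have heq := congrFun (hmin g hg hle) v
    simp only [hgdef, if_pos rfl] at heq
    rw [hv] at heq
    exact absurd heq (by decide)
  have part1 : closedNbhdSet G {v | f v = 2} = {v | f v = 0} ∪ {v | f v = 2} := by
    ext w
    constructor
    · intro hw
      rcases h3 (f w) with h | h | h
      · exact Or.inl h
      · exact absurd hw (key w h)
      · exact Or.inr h
    · rintro (h | h)
      · obtain ⟨u, ha, hu2⟩ := hrdf w h
        simp only [closedNbhdSet, closedNbhd, Set.mem_iUnion, Set.mem_setOf_eq]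
        exact ⟨u, hu2, Or.inr ha.symm⟩
      · simp only [closedNbhdSet, closedNbhd, Set.mem_iUnion, Set.mem_setOf_eq]
        exact ⟨w, h, Or.inl rfl⟩
  refine ⟨part1, ?_, ?_⟩
  · constructor
    · intro v hv
      simp only [closedNbhdSet, closedNbhd, Set.mem_iUnion, Set.mem_setOf_eq]
      exact ⟨v, hv, Or.inl rfl⟩
    · intro w hw
      simp only [closedNbhdSet, closedNbhd, Set.mem_iUnion, Set.mem_setOf_eq] at hw
      obtain ⟨u, hu2, hmem⟩ := hw
      exact ⟨u, hu2, hmem⟩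
  · intro D' hD' hdom
    obtain ⟨hsub, hv⟩ := hD'
    obtain ⟨v, hv2, hvD'⟩ := Set.not_subset.mp hv
    -- define g = f except g v = 1
    set g : V → Fin 3 := fun w => if w = v then 1 else f w with hgdef
    have hg : IsRDF G g := by
      intro w hw
      have hwv : w ≠ v := by
        intro h; rw [h] at hw; simp only [hgdef, if_pos rfl] at hw
        exact absurd hw (by decide)
      simp only [hgdef, if_neg hwv] at hw
      have hwU : w ∈ closedNbhdSet G {v | f v = 2} := by
        rw [part1]; exact Or.inl hw
      obtain ⟨u, huD', hor⟩ := hdom.2 w hwU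
      have hu2 : f u = 2 := hsub huD'
      have hune : u ≠ v := fun h => hvD' (h ▸ huD')
      rcases hor with h | h
      · rw [h, hu2] at hw; exact absurd hw (by decide)
      · refine ⟨u, h.symm, ?_⟩
        simp only [hgdef]; rw [if_neg hune]; exact hu2
    have hle : ∀ w, g w ≤ f w := by
      intro w
      by_cases hwv : w = v
      · simp only [hgdef, if_pos hwv]
        rw [hwv, hv2]
        decide
      · simp only [hgdef, if_neg hwv]; exact le_refl _
    have heq := congrFun (hmin g hg hle) v
    simp only [hgdef, if_pos rfl] at heq
    rw [hv2] at heq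
    exact absurd heq (by decide)
end

section
/- Let G = (V,E) be a finite undirected simple graph and let f : V → {0,1,2}. Write G' = G[V₀(f) ∪ V₂(f)]. Then f is a minimal Roman dominating function on G if and only if the following three conditions all hold: (1) N_G[V₂(f)] ∩ V₁(f) = ∅; (2) for every v ∈ V₂(f), P_{G', V₂(f)}(v) ⊄ {v}; (3) V₂(f) is a minimal dominating set of G'. -/
variable {V : Type*}

theorem stmt_5 [Fintype V] (G : SimpleGraph V) (f : V → Fin 3) :
    IsMinimalRDF G f ↔
      (closedNbhdSet G {v | f v = 2} ∩ {v | f v = 1} = ∅ ∧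
       (∀ v, f v = 2 →
         ¬ indPrivateNbhd G ({w | f w = 0} ∪ {w | f w = 2}) {w | f w = 2} v ⊆ {v}) ∧
       IsMinDomSetOn G ({v | f v = 0} ∪ {v | f v = 2}) {v | f v = 2}) := by
  classical
  set U : Set V := {w | f w = 0} ∪ {w | f w = 2} with hU
  constructor
  · rintro ⟨hrdf, hmin⟩
    -- condition (2)
    have h2 : ∀ v, f v = 2 →
        ¬ indPrivateNbhd G U {w | f w = 2} v ⊆ {v} := by
      intro v hv hsub
      set g := Function.update f v 1 with hgdef
      have hgle : ∀ w, g w ≤ f w := by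
        intro w
        by_cases h : w = v
        · subst h; simp [g, hv]
        · simp [g, Function.update_of_ne h]
      have hgrdf : IsRDF G g := by
        intro w hw
        have hwv : w ≠ v := by
          intro h; subst h; simp [g] at hw
        have hfw : f w = 0 := by simpa [g, Function.update_of_ne hwv] using hw
        obtain ⟨u, hadj, hu2⟩ := hrdf w hfw
        by_cases huv : u = v
        · rw [huv] at hadj
          have hwU : w ∈ U := Or.inl hfw
          have hwcn : w ∈ indClosedNbhd G U v := ⟨Or.inr hv, hwU, Or.inr hadj.symm⟩
          have hwun : w ∈ ⋃ u ∈ ({w | f w = 2} : Set V) \ {v}, indClosedNbhd G U u := by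
            by_contra hc
            exact hwv (hsub ⟨hwcn, hc⟩)
          simp only [Set.mem_iUnion, Set.mem_diff, Set.mem_setOf_eq,
            Set.mem_singleton_iff, exists_prop] at hwun
          obtain ⟨u', ⟨hu'2, hu'v⟩, _, _, hcond⟩ := hwun
          rcases hcond with rfl | hadj'
          · exact absurd hu'2 (by simp [hfw])
          · exact ⟨u', hadj'.symm, by simp [g, Function.update_of_ne hu'v, hu'2]⟩
        · exact ⟨u, hadj, by simp [g, Function.update_of_ne huv, hu2]⟩
      have heq : g v = f v := congrFun (hmin g hgrdf hgle) v
      simp [g, hv] at heq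
    -- condition (1)
    have h1 : closedNbhdSet G {v | f v = 2} ∩ {v | f v = 1} = ∅ := by
      rw [Set.eq_empty_iff_forall_notMem]
      rintro v ⟨hvN, hv1⟩
      simp only [closedNbhdSet, closedNbhd, Set.mem_iUnion, Set.mem_setOf_eq,
        exists_prop] at hvN
      obtain ⟨u, hu2, hcond⟩ := hvN
      have hv1' : f v = 1 := hv1
      have huv : u ≠ v := by intro h; rw [h, hv1'] at hu2; exact absurd hu2 (by decide)
      have hadj : G.Adj u v := by
        rcases hcond with h | h
        · exact absurd h.symm huv
        · exact h
      set g := Function.update f v 0 with hgdef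
      have hgle : ∀ w, g w ≤ f w := by
        intro w
        by_cases h : w = v
        · subst h; simp [g, hv1']
        · simp [g, Function.update_of_ne h]
      have hgrdf : IsRDF G g := by
        intro w hw
        by_cases hwv : w = v
        · subst hwv
          exact ⟨u, hadj.symm, by simp [g, Function.update_of_ne huv, hu2]⟩
        · have hfw : f w = 0 := by simpa [g, Function.update_of_ne hwv] using hw
          obtain ⟨u', hadj', hu'2⟩ := hrdf w hfw
          have hu'v : u' ≠ v := by intro h; rw [h, hv1'] at hu'2; exact absurd hu'2 (by decide)
          exact ⟨u', hadj', by simp [g, Function.update_of_ne hu'v, hu'2]⟩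
      have heq : g v = f v := congrFun (hmin g hgrdf hgle) v
      simp [g, hv1'] at heq
    -- domination
    have hdom : IsDomSetOn G U {v | f v = 2} := by
      refine ⟨fun w hw => Or.inr hw, ?_⟩
      rintro w (hw0 | hw2)
      · obtain ⟨u, hadj, hu2⟩ := hrdf w hw0
        exact ⟨u, hu2, Or.inr hadj.symm⟩
      · exact ⟨w, hw2, Or.inl rfl⟩
    refine ⟨h1, h2, hdom, ?_⟩
    -- minimality of dominating set
    rintro D' hD' ⟨hD'sub, hD'dom⟩
    obtain ⟨v, hv2, hvD'⟩ := (Set.ssubset_iff_of_subset hD'.subset).mp hD'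
    have hv2' : f v = 2 := hv2
    obtain ⟨w, hwpriv, hwv⟩ := Set.not_subset.mp (h2 v hv2')
    have hwv' : w ≠ v := hwv
    obtain ⟨hwcn, hwun⟩ := hwpriv
    have hwU : w ∈ U := hwcn.2.1
    obtain ⟨u, huD', hcond⟩ := hD'dom w hwU
    have hu2 : f u = 2 := hD'.subset huD'
    have huv : u ≠ v := by intro h; rw [h] at huD'; exact hvD' huD'
    apply hwun
    simp only [Set.mem_iUnion, Set.mem_diff, Set.mem_setOf_eq,
      Set.mem_singleton_iff, exists_prop]
    exact ⟨u, ⟨hu2, huv⟩, Or.inr hu2, hwU, hcond⟩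
  · rintro ⟨h1, h2, ⟨hDsub, hdom⟩, hminD⟩
    have hrdf : IsRDF G f := by
      intro v hv
      obtain ⟨u, hu2, hcond⟩ := hdom v (Or.inl hv)
      have hu2' : f u = 2 := hu2
      rcases hcond with rfl | hadj
      · rw [hv] at hu2'; exact absurd hu2' (by decide)
      · exact ⟨u, hadj.symm, hu2'⟩
    refine ⟨hrdf, ?_⟩
    intro g hg hle
    funext v
    by_contra hne
    have hlt : g v < f v := lt_of_le_of_ne (hle v) hne
    have hcase : f v = 1 ∧ g v = 0 ∨ f v = 2 ∧ g v ≠ 2 := by omega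
    rcases hcase with ⟨hfv, hgv⟩ | ⟨hfv, hgv⟩
    · obtain ⟨u, hadj, hu2⟩ := hg v hgv
      have hfu : f u = 2 := by have := hle u; omega
      have hmem : v ∈ closedNbhdSet G {w | f w = 2} ∩ {w | f w = 1} := by
        refine ⟨?_, hfv⟩
        simp only [closedNbhdSet, closedNbhd, Set.mem_iUnion, Set.mem_setOf_eq, exists_prop]
        exact ⟨u, hfu, Or.inr hadj.symm⟩
      rw [h1] at hmem
      exact hmem
    · obtain ⟨w, hwpriv, hwv⟩ := Set.not_subset.mp (h2 v hfv)
      have hwv' : w ≠ v := hwv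
      obtain ⟨⟨hvU, hwU, hcond⟩, hwun⟩ := hwpriv
      rcases hwU with hw0 | hw2
      · have hgw : g w = 0 := by have := hle w; have hfw : f w = 0 := hw0; omega
        obtain ⟨u, hadj, hu2⟩ := hg w hgw
        have hfu : f u = 2 := by have := hle u; omega
        have huv : u ≠ v := by intro h; rw [h] at hu2; exact hgv hu2
        apply hwun
        simp only [Set.mem_iUnion, Set.mem_diff, Set.mem_setOf_eq,
          Set.mem_singleton_iff, exists_prop]
        exact ⟨u, ⟨hfu, huv⟩, Or.inr hfu, Or.inl hw0, Or.inr hadj.symm⟩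
      · apply hwun
        simp only [Set.mem_iUnion, Set.mem_diff, Set.mem_setOf_eq,
          Set.mem_singleton_iff, exists_prop]
        exact ⟨w, ⟨hw2, hwv'⟩, Or.inr hw2, Or.inr hw2, Or.inl rfl⟩
end

section
/- Let G = (V,E) be a finite undirected simple graph and let f : V → {0,1,2} be a minimal Roman dominating function on G. Then 2·|V₂(f)| ≤ |V|. -/
variable {V : Type*}

theorem stmt_6 [Fintype V] (G : SimpleGraph V) (f : V → Fin 3)
    (hf : IsMinimalRDF G f) :
    2 * {v | f v = 2}.ncard ≤ Fintype.card V := by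
  classical
  obtain ⟨hrdf, hmin⟩ := hf
  have key : ∀ v : V, ∃ u : V, f v = 2 →
      f u = 0 ∧ G.Adj v u ∧ ∀ w, G.Adj u w → w ≠ v → f w ≠ 2 := by
    intro v
    by_cases hv : f v = 2
    · set g : V → Fin 3 := Function.update f v 1 with hg
      have hne : g ≠ f := by
        intro h
        have := congrFun h v
        simp [hg, hv] at this
      have hle : ∀ w, g w ≤ f w := by
        intro w
        by_cases hw : w = v
        · subst hw; simp [hg, hv]
        · simp [hg, hw]
      have hnrdf : ¬ IsRDF G g := fun h => hne (hmin g h hle)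
      rw [IsRDF] at hnrdf
      push_neg at hnrdf
      obtain ⟨u, hu0, hu⟩ := hnrdf
      have huv : u ≠ v := by
        intro h; subst h; simp [hg] at hu0
      have hfu : f u = 0 := by simpa [hg, huv] using hu0
      obtain ⟨w, hadj, hw2⟩ := hrdf u hfu
      have hwv : w = v := by
        by_contra h
        exact (hu w hadj) (by simpa [hg, h] using hw2)
      subst hwv
      refine ⟨u, fun _ => ⟨hfu, hadj.symm, ?_⟩⟩
      intro w hadjw hwv hfw2
      exact (hu w hadjw) (by simpa [hg, hwv] using hfw2)
    · exact ⟨v, fun h => absurd h hv⟩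
  choose φ hφ using key
  set A : Finset V := {v | f v = 2}.toFinset with hA
  set B : Finset V := {v | f v = 0}.toFinset with hB
  have hmapsto : ∀ v ∈ A, φ v ∈ B := by
    intro v hv
    rw [hA, Set.mem_toFinset] at hv
    rw [hB, Set.mem_toFinset]
    exact (hφ v hv).1
  have hinj : Set.InjOn φ A := by
    intro v1 hv1 v2 hv2 heq
    simp only [hA, Finset.mem_coe, Set.mem_toFinset, Set.mem_setOf_eq] at hv1 hv2
    obtain ⟨_, hadj1, hpriv1⟩ := hφ v1 hv1
    obtain ⟨_, hadj2, _⟩ := hφ v2 hv2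
    by_contra hne
    exact hpriv1 v2 (heq ▸ hadj2.symm) (Ne.symm hne) hv2
  have hcard : A.card ≤ B.card := Finset.card_le_card_of_injOn φ hmapsto hinj
  have hdisj : Disjoint A B := by
    rw [Finset.disjoint_left]
    intro a ha hb
    rw [hA, Set.mem_toFinset] at ha
    rw [hB, Set.mem_toFinset] at hb
    simp only [Set.mem_setOf_eq] at ha hb
    rw [ha] at hb
    exact absurd hb (by decide)
  have hsum : A.card + B.card ≤ Fintype.card V := by
    rw [← Finset.card_union_of_disjoint hdisj, ← Finset.card_univ]
    exact Finset.card_le_card (Finset.subset_univ _)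
  have hncard : {v | f v = 2}.ncard = A.card := by
    rw [hA, Set.ncard_eq_toFinset_card']
  rw [hncard]
  omega
end

section
/- Let G = (V,E) be a finite undirected simple graph and let V₂ ⊆ V be such that for every v ∈ V₂, P_{G,V₂}(v) ⊄ {v}. Then there exists exactly one minimal Roman dominating function f : V → {0,1,2} on G with V₂(f) = V₂; namely, f(v) = 2 for v ∈ V₂, f(v) = 1 for v ∉ N_G[V₂], and f(v) = 0 otherwise. -/
variable {V : Type*}

lemma fin3_le_zero {x : Fin 3} (h : x ≤ 0) : x = 0 := by revert h; revert x; decide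
lemma fin3_two_le {x : Fin 3} (h : (2 : Fin 3) ≤ x) : x = 2 := by revert h; revert x; decide
lemma fin3_one {x : Fin 3} (h1 : x ≠ 0) (h2 : x ≠ 2) : x = 1 := by revert h1 h2; revert x; decide
lemma fin3_one' {x : Fin 3} (h1 : x ≤ 1) (h2 : x ≠ 0) : x = 1 := by revert h1 h2; revert x; decide

lemma mem_cns {G : SimpleGraph V} {U : Set V} {w : V} :
    w ∈ closedNbhdSet G U ↔ ∃ u ∈ U, w = u ∨ G.Adj u w := by
  simp [closedNbhdSet, closedNbhd]

theorem stmt_7 [Fintype V] (G : SimpleGraph V) (V2 : Set V)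
    (hpriv : ∀ v ∈ V2, ¬ privateNbhd G V2 v ⊆ {v}) :
    (∃! f : V → Fin 3, IsMinimalRDF G f ∧ {v | f v = 2} = V2) ∧
    (∀ f : V → Fin 3, IsMinimalRDF G f → {v | f v = 2} = V2 →
      (∀ v ∈ V2, f v = 2) ∧
      (∀ v, v ∉ closedNbhdSet G V2 → f v = 1) ∧
      (∀ v, v ∉ V2 → v ∈ closedNbhdSet G V2 → f v = 0)) := by
  classical
  have hV2N : V2 ⊆ closedNbhdSet G V2 := fun v hv => mem_cns.mpr ⟨v, hv, Or.inl rfl⟩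
  set f0 : V → Fin 3 :=
    fun v => if v ∈ V2 then 2 else if v ∈ closedNbhdSet G V2 then 0 else 1 with hf0
  have hf0_two : ∀ v, f0 v = 2 ↔ v ∈ V2 := by
    intro v
    by_cases h : v ∈ V2
    · simp [hf0, h]
    · by_cases h2 : v ∈ closedNbhdSet G V2 <;> simp [hf0, h, h2]
  -- key forcing lemma
  have key : ∀ g : V → Fin 3, IsRDF G g → (∀ v, g v ≤ f0 v) → ∀ v, g v = f0 v := by
    intro g hg hle v
    by_cases hv : v ∈ V2
    · obtain ⟨w, hwP, hwne⟩ := Set.not_subset.mp (hpriv v hv)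
      obtain ⟨hwN, hwNot⟩ := hwP
      have hwnev : w ≠ v := by simpa using hwne
      have hadj : G.Adj v w := hwN.resolve_left hwnev
      have hwV2 : w ∉ V2 := fun h =>
        hwNot (mem_cns.mpr ⟨w, ⟨h, hwnev⟩, Or.inl rfl⟩)
      have hwInN : w ∈ closedNbhdSet G V2 := mem_cns.mpr ⟨v, hv, Or.inr hadj⟩
      have hf0w : f0 w = 0 := by simp [hf0, hwV2, hwInN]
      have hgw : g w = 0 := fin3_le_zero (hf0w ▸ hle w)
      obtain ⟨u, huadj, hu2⟩ := hg w hgw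
      have huf0 : f0 u = 2 := fin3_two_le (hu2 ▸ hle u)
      have huV2 : u ∈ V2 := (hf0_two u).mp huf0
      have huv : u = v := by
        by_contra hne
        exact hwNot (mem_cns.mpr ⟨u, ⟨huV2, hne⟩, Or.inr huadj.symm⟩)
      have : f0 v = 2 := (hf0_two v).mpr hv
      rw [this, ← huv]
      exact hu2
    · by_cases hvN : v ∈ closedNbhdSet G V2
      · have h0 : f0 v = 0 := by simp [hf0, hv, hvN]
        rw [h0]; exact fin3_le_zero (h0 ▸ hle v)
      · have h1 : f0 v = 1 := by simp [hf0, hv, hvN]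
        have hne0 : g v ≠ 0 := by
          intro h0
          obtain ⟨u, huadj, hu2⟩ := hg v h0
          have huV2 : u ∈ V2 := (hf0_two u).mp (fin3_two_le (hu2 ▸ hle u))
          exact hvN (mem_cns.mpr ⟨u, huV2, Or.inr huadj.symm⟩)
        rw [h1]; exact fin3_one' (h1 ▸ hle v) hne0
  have hf0rdf : IsRDF G f0 := by
    intro v hv0
    have hv : v ∉ V2 := by
      intro h; rw [(hf0_two v).mpr h] at hv0; exact absurd hv0 (by decide)
    have hvN : v ∈ closedNbhdSet G V2 := by
      by_contra h
      have : f0 v = 1 := by simp [hf0, hv, h]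
      rw [this] at hv0; exact absurd hv0 (by decide)
    obtain ⟨u, huV2, hor⟩ := mem_cns.mp hvN
    have hne : v ≠ u := fun h => hv (h ▸ huV2)
    exact ⟨u, (hor.resolve_left hne).symm, (hf0_two u).mpr huV2⟩
  have hf0min : IsMinimalRDF G f0 :=
    ⟨hf0rdf, fun g hg hle => funext (key g hg hle)⟩
  have hf0set : {v | f0 v = 2} = V2 := Set.ext fun v => hf0_two v
  -- part 2
  have part2 : ∀ f : V → Fin 3, IsMinimalRDF G f → {v | f v = 2} = V2 →
      (∀ v ∈ V2, f v = 2) ∧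
      (∀ v, v ∉ closedNbhdSet G V2 → f v = 1) ∧
      (∀ v, v ∉ V2 → v ∈ closedNbhdSet G V2 → f v = 0) := by
    intro f hf hset
    have h2iff : ∀ v, f v = 2 ↔ v ∈ V2 := fun v => Set.ext_iff.mp hset v
    refine ⟨fun v hv => (h2iff v).mpr hv, ?_, ?_⟩
    · intro v hvN
      have hv : v ∉ V2 := fun h => hvN (hV2N h)
      have hne2 : f v ≠ 2 := fun h => hv ((h2iff v).mp h)
      have hne0 : f v ≠ 0 := by
        intro h0
        obtain ⟨u, huadj, hu2⟩ := hf.1 v h0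
        exact hvN (mem_cns.mpr ⟨u, (h2iff u).mp hu2, Or.inr huadj.symm⟩)
      exact fin3_one hne0 hne2
    · intro v hv hvN
      set g : V → Fin 3 := Function.update f v 0 with hgdef
      have hgrdf : IsRDF G g := by
        intro w hw0
        by_cases hwv : w = v
        · subst hwv
          obtain ⟨u, huV2, hor⟩ := mem_cns.mp hvN
          have hne : w ≠ u := fun h => hv (h ▸ huV2)
          refine ⟨u, (hor.resolve_left hne).symm, ?_⟩
          rw [hgdef, Function.update_of_ne (Ne.symm hne)]
          exact (h2iff u).mpr huV2
        · rw [hgdef, Function.update_of_ne hwv] at hw0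
          obtain ⟨u, huadj, hu2⟩ := hf.1 w hw0
          have huV2 : u ∈ V2 := (h2iff u).mp hu2
          have hne : u ≠ v := fun h => hv (h ▸ huV2)
          exact ⟨u, huadj, by rw [hgdef, Function.update_of_ne hne]; exact hu2⟩
      have hle : ∀ w, g w ≤ f w := by
        intro w
        by_cases hwv : w = v
        · subst hwv; rw [hgdef, Function.update_self]; exact Fin.zero_le _
        · rw [hgdef, Function.update_of_ne hwv]
      have := hf.2 g hgrdf hle
      have : g v = f v := congrFun this v
      rw [← this, hgdef, Function.update_self]
  refine ⟨⟨f0, ⟨hf0min, hf0set⟩, ?_⟩, part2⟩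
  rintro f ⟨hfmin, hfset⟩
  obtain ⟨p1, p2, p3⟩ := part2 f hfmin hfset
  funext v
  by_cases hv : v ∈ V2
  · rw [p1 v hv, (hf0_two v).mpr hv]
  · by_cases hvN : v ∈ closedNbhdSet G V2
    · rw [p3 v hv hvN]; simp [hf0, hv, hvN]
    · rw [p2 v hvN]; simp [hf0, hv, hvN]
end

section
/- For every positive integer c, the graph consisting of a disjoint union of c cycles on five vertices each (a graph of order n = 5c) has exactly 16^c minimal Roman dominating functions. -/
set_option maxRecDepth 100000


variable {V : Type*}

/-- The cycle on five vertices. -/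
def C5 : SimpleGraph (Fin 5) := SimpleGraph.fromRel (fun i j => j = i + 1)

/-- Disjoint union of c copies of the five-cycle. -/
def disjointC5 (c : ℕ) : SimpleGraph (Fin c × Fin 5) where
  Adj a b := a.1 = b.1 ∧ C5.Adj a.2 b.2
  symm := ⟨fun a b h => ⟨h.1.symm, h.2.symm⟩⟩
  loopless := ⟨fun a h => C5.irrefl h.2⟩

instance : DecidableRel C5.Adj := fun a b => by
  unfold C5; rw [SimpleGraph.fromRel_adj]; infer_instance
instance : DecidablePred (IsRDF C5) := fun f => by unfold IsRDF; infer_instance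
instance : DecidablePred (IsMinimalRDF C5) := fun f => by unfold IsMinimalRDF; infer_instance

lemma rdf_iff (c : ℕ) (f : Fin c × Fin 5 → Fin 3) :
    IsRDF (disjointC5 c) f ↔ ∀ i, IsRDF C5 (fun v => f (i, v)) := by
  constructor
  · intro h i v hv
    obtain ⟨⟨u1, u2⟩, ⟨h1, h2⟩, hu2⟩ := h (i, v) hv
    cases h1
    exact ⟨u2, h2, hu2⟩
  · intro h p hp
    obtain ⟨u, hu, hu2⟩ := h p.1 p.2 hp
    exact ⟨(p.1, u), ⟨rfl, hu⟩, hu2⟩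

lemma min_iff (c : ℕ) (f : Fin c × Fin 5 → Fin 3) :
    IsMinimalRDF (disjointC5 c) f ↔ ∀ i, IsMinimalRDF C5 (fun v => f (i, v)) := by
  constructor
  · intro ⟨hf, hmin⟩ i
    refine ⟨(rdf_iff c f).1 hf i, fun g hg hle => ?_⟩
    classical
    set G : Fin c × Fin 5 → Fin 3 := fun p => if p.1 = i then g p.2 else f p
    have hGrdf : IsRDF (disjointC5 c) G := by
      rw [rdf_iff]
      intro j
      by_cases hj : j = i
      · subst hj
        have : (fun v => G (j, v)) = g := by funext v; simp [G]
        rwa [this]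
      · have : (fun v => G (j, v)) = fun v => f (j, v) := by funext v; simp [G, hj]
        rw [this]; exact (rdf_iff c f).1 hf j
    have hGle : ∀ p, G p ≤ f p := by
      rintro ⟨j, v⟩
      by_cases hj : j = i
      · subst hj; simpa [G] using hle v
      · simp [G, hj]
    have hGf := hmin G hGrdf hGle
    funext v
    have := congrFun hGf (i, v)
    simpa [G] using this
  · intro h
    refine ⟨(rdf_iff c f).2 fun i => (h i).1, fun g hg hle => ?_⟩
    funext p
    have := (h p.1).2 (fun v => g (p.1, v)) ((rdf_iff c g).1 hg p.1)
      (fun v => hle (p.1, v))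
    exact congrFun this p.2

theorem stmt_11 (c : ℕ) (hc : 0 < c) :
    {f : Fin c × Fin 5 → Fin 3 | IsMinimalRDF (disjointC5 c) f}.ncard = 16 ^ c := by
  classical
  have hset : {f : Fin c × Fin 5 → Fin 3 | IsMinimalRDF (disjointC5 c) f}
      = {f | ∀ i, IsMinimalRDF C5 (fun v => f (i, v))} := by
    ext f; exact min_iff c f
  rw [hset, ← Nat.card_coe_set_eq]
  have e : ↑{f : Fin c × Fin 5 → Fin 3 | ∀ i, IsMinimalRDF C5 (fun v => f (i, v))}
      ≃ (Fin c → {h : Fin 5 → Fin 3 // IsMinimalRDF C5 h}) :=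
    { toFun := fun f i => ⟨fun v => f.1 (i, v), f.2 i⟩
      invFun := fun g => ⟨fun p => (g p.1).1 p.2, fun i => (g i).2⟩
      left_inv := fun f => rfl
      right_inv := fun g => rfl }
  rw [Nat.card_congr e, Nat.card_pi]
  have h16 : Nat.card {h : Fin 5 → Fin 3 // IsMinimalRDF C5 h} = 16 := by
    rw [Nat.card_eq_fintype_card, Fintype.card_subtype]
    decide
  simp only [h16, Finset.prod_const, Finset.card_univ, Fintype.card_fin]
end

section
/- Let G = (V,E) be a finite undirected simple graph of order n. Then the number of minimal Roman dominating functions on G is at most the number of subsets of V of cardinality at most n/2, i.e., at most Σ_{k=0}^{⌊n/2⌋} C(n,k). -/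
variable {V : Type*}

lemma minimal_not_one (G : SimpleGraph V) {f : V → Fin 3} (hf : IsMinimalRDF G f) {v u : V}
    (hadj : G.Adj v u) (hu : f u = 2) : f v ≠ 1 := by
  intro hv1
  classical
  set g := Function.update f v 0 with hg
  have hgf : ∀ w, g w ≤ f w := fun w => by
    by_cases h : w = v
    · subst h; simp only [g, Function.update_self]; exact Fin.zero_le _
    · simp [g, Function.update_of_ne h]
  have hgr : IsRDF G g := by
    intro w hw
    by_cases h : w = v
    · subst h
      have huv : u ≠ w := fun e => by rw [e, hv1] at hu; exact absurd hu (by decide)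
      exact ⟨u, hadj, by simp [g, Function.update_of_ne huv, hu]⟩
    · have hw' : f w = 0 := by simpa [g, Function.update_of_ne h] using hw
      obtain ⟨u', hu'adj, hu'2⟩ := hf.1 w hw'
      have : u' ≠ v := fun e => by rw [e, hv1] at hu'2; exact absurd hu'2 (by decide)
      exact ⟨u', hu'adj, by simp [g, Function.update_of_ne this, hu'2]⟩
  have heq := congrFun (hf.2 g hgr hgf) v
  rw [hv1] at heq
  simp only [g, Function.update_self] at heq
  exact absurd heq (by decide)

lemma private_neighbor (G : SimpleGraph V) {f : V → Fin 3} (hf : IsMinimalRDF G f) {v : V}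
    (hv : f v = 2) : ∃ w, G.Adj w v ∧ f w = 0 ∧ ∀ u, G.Adj w u → f u = 2 → u = v := by
  classical
  set g := Function.update f v 1 with hg
  have hgf : ∀ w, g w ≤ f w := fun w => by
    by_cases h : w = v
    · subst h; simp [g, Function.update_self, hv]
    · simp [g, Function.update_of_ne h]
  have hne : g ≠ f := by
    intro e
    have := congrFun e v
    rw [hv] at this
    simp only [g, Function.update_self] at this
    exact absurd this (by decide)
  have hng : ¬ IsRDF G g := fun h => hne (hf.2 g h hgf)
  simp only [IsRDF, not_forall] at hng
  push_neg at hng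
  obtain ⟨w, hw0, hw⟩ := hng
  have hwv : w ≠ v := by
    intro e; rw [e] at hw0; simp [g, Function.update_self] at hw0
  have hfw0 : f w = 0 := by simpa [g, Function.update_of_ne hwv] using hw0
  obtain ⟨u, huadj, hu2⟩ := hf.1 w hfw0
  have huv : u = v := by
    by_contra h
    exact hw u huadj (by simp [g, Function.update_of_ne h, hu2])
  refine ⟨w, huv ▸ huadj, hfw0, fun u' hu'adj hu'2 => ?_⟩
  by_contra h
  exact hw u' hu'adj (by simp [g, Function.update_of_ne h, hu'2])

lemma fin3_cases (x : Fin 3) : x = 0 ∨ x = 1 ∨ x = 2 := by omega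

lemma eq_of_two_eq (G : SimpleGraph V) {f g : V → Fin 3}
    (hf : IsMinimalRDF G f) (hg : IsMinimalRDF G g)
    (h : ∀ v, f v = 2 ↔ g v = 2) : f = g := by
  funext v
  rcases fin3_cases (f v) with h0 | h1 | h2
  · obtain ⟨u, huadj, hu2⟩ := hf.1 v h0
    have hgu : g u = 2 := (h u).1 hu2
    rcases fin3_cases (g v) with g0 | g1 | g2
    · rw [h0, g0]
    · exact absurd g1 (minimal_not_one G hg huadj hgu)
    · exact absurd ((h v).2 g2) (by rw [h0]; decide)
  · rcases fin3_cases (g v) with g0 | g1 | g2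
    · obtain ⟨u, huadj, hu2⟩ := hg.1 v g0
      exact absurd h1 (minimal_not_one G hf huadj ((h u).2 hu2))
    · rw [h1, g1]
    · exact absurd ((h v).2 g2) (by rw [h1]; decide)
  · rw [h2, (h v).1 h2]

lemma card_two_le [Fintype V] (G : SimpleGraph V) {f : V → Fin 3}
    (hf : IsMinimalRDF G f) :
    (Finset.univ.filter (fun v => f v = 2)).card ≤ Fintype.card V / 2 := by
  classical
  set s := Finset.univ.filter (fun v => f v = 2) with hs
  have hmem : ∀ v ∈ s, f v = 2 := fun v hv => (Finset.mem_filter.1 hv).2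
  set p : V → V := fun v =>
    if h : f v = 2 then (private_neighbor G hf h).choose else v with hp
  have hspec : ∀ v ∈ s, G.Adj (p v) v ∧ f (p v) = 0 ∧
      ∀ u, G.Adj (p v) u → f u = 2 → u = v := by
    intro v hv
    have h := hmem v hv
    simp only [p, dif_pos h]
    exact (private_neighbor G hf h).choose_spec
  have hinj : Set.InjOn p s := by
    intro v1 h1 v2 h2 he
    have s1 := hspec v1 h1
    have s2 := hspec v2 h2
    exact (s1.2.2 v2 (he ▸ s2.1) (hmem v2 h2)).symm
  have hdisj : Disjoint s (s.image p) := by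
    rw [Finset.disjoint_right]
    intro w hw hws
    obtain ⟨v, hv, rfl⟩ := Finset.mem_image.1 hw
    have := (hspec v hv).2.1
    rw [hmem _ hws] at this
    exact absurd this (by decide)
  have hcard : (s.image p).card = s.card := Finset.card_image_of_injOn hinj
  have : s.card + s.card ≤ Fintype.card V := by
    calc s.card + s.card = (s ∪ s.image p).card := by
          rw [Finset.card_union_of_disjoint hdisj, hcard]
      _ ≤ Fintype.card V := Finset.card_le_univ _
  omega

lemma count_small [Fintype V] (m : ℕ) :
    (Finset.univ.filter (fun t : Finset V => t.card ≤ m)).card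
      = ∑ k ∈ Finset.range (m + 1), (Fintype.card V).choose k := by
  classical
  have heq : Finset.univ.filter (fun t : Finset V => t.card ≤ m)
      = (Finset.range (m + 1)).biUnion
          (fun k => Finset.powersetCard k Finset.univ) := by
    ext t
    simp [Finset.mem_powersetCard, Nat.lt_succ_iff]
  rw [heq, Finset.card_biUnion]
  · refine Finset.sum_congr rfl fun k _ => ?_
    simp [Finset.card_powersetCard]
  · intro i _ j _ hij
    rw [Function.onFun, Finset.disjoint_left]
    intro t hti htj
    rw [Finset.mem_powersetCard] at hti htj
    exact hij (hti.2.symm.trans htj.2)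

theorem stmt_13 [Fintype V] (G : SimpleGraph V) :
    {f : V → Fin 3 | IsMinimalRDF G f}.ncard ≤
      ∑ k ∈ Finset.range (Fintype.card V / 2 + 1), (Fintype.card V).choose k := by
  classical
  set Φ : (V → Fin 3) → Finset V := fun f => Finset.univ.filter (fun v => f v = 2) with hΦ
  set S : Set (V → Fin 3) := {f | IsMinimalRDF G f} with hS
  have hinj : Set.InjOn Φ S := by
    intro f hf g hg he
    refine eq_of_two_eq G hf hg fun v => ?_
    constructor <;> intro h
    · have : v ∈ Φ f := Finset.mem_filter.2 ⟨Finset.mem_univ _, h⟩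
      rw [he] at this
      exact (Finset.mem_filter.1 this).2
    · have : v ∈ Φ g := Finset.mem_filter.2 ⟨Finset.mem_univ _, h⟩
      rw [← he] at this
      exact (Finset.mem_filter.1 this).2
  have hsub : Φ '' S ⊆
      ↑(Finset.univ.filter (fun t : Finset V => t.card ≤ Fintype.card V / 2)) := by
    rintro t ⟨f, hf, rfl⟩
    simp only [Finset.coe_filter, Set.mem_setOf_eq]
    exact ⟨Finset.mem_univ _, card_two_le G hf⟩
  calc S.ncard = (Φ '' S).ncard := (Set.ncard_image_of_injOn hinj).symm
    _ ≤ (↑(Finset.univ.filter (fun t : Finset V => t.card ≤ Fintype.card V / 2)) :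
          Set (Finset V)).ncard :=
        Set.ncard_le_ncard hsub (Finset.finite_toSet _)
    _ = (Finset.univ.filter (fun t : Finset V => t.card ≤ Fintype.card V / 2)).card :=
        Set.ncard_coe_finset _
    _ = _ := count_small _
end

section
/- For every n ≥ 1, the star K_{1,n} (one center vertex adjacent to n leaves, with no other edges) has exactly 2^n + 1 PO-minimal Roman dominating functions; namely: the function with value 2 on the center and 0 on all leaves; the constant function 1; and, for each assignment of values from {1,2} to the leaves other than the all-1 assignment, the function with value 0 on the center and that assignment on the leaves. -/
variable {V : Type*}

/-- f ≤_PO g : pointwise lifting of the partial order 0 < 1, 0 < 2 on values. -/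
def POle (f g : V → Fin 3) : Prop :=
  (∀ v, f v = 1 → g v = 1) ∧ (∀ v, f v = 2 → g v = 2)

/-- PO-minimal Roman dominating function. -/
def IsPOMinimalRDF (G : SimpleGraph V) (f : V → Fin 3) : Prop :=
  IsRDF G f ∧ ∀ g : V → Fin 3, IsRDF G g → POle g f → g = f

/-- The star K_{1,n}: vertex 0 is the center, adjacent to each of the n leaves. -/
def starGraph (n : ℕ) : SimpleGraph (Fin (n + 1)) :=
  SimpleGraph.fromRel (fun i _ => i = 0)

lemma fin2_cases (x : Fin 2) : x = 0 ∨ x = 1 := by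
  fin_cases x <;> simp

lemma star_adj {n : ℕ} {i j : Fin (n + 1)} :
    (starGraph n).Adj i j ↔ i ≠ j ∧ (i = 0 ∨ j = 0) := by
  simp [starGraph]

/-- Characterization of PO-minimal RDFs on the star. -/
lemma star_char (n : ℕ) (f : Fin (n + 1) → Fin 3) :
    IsPOMinimalRDF (starGraph n) f ↔
      ((f 0 = 2 ∧ ∀ v, v ≠ 0 → f v = 0) ∨
       (∀ v, f v = 1) ∨
       (f 0 = 0 ∧ (∀ v, v ≠ 0 → f v = 1 ∨ f v = 2) ∧ ¬ (∀ v, v ≠ 0 → f v = 1))) := by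
  constructor
  · rintro ⟨hrdf, hmin⟩
    rcases fin3_cases (f 0) with h0 | h0 | h0
    · -- f 0 = 0 : case 3
      refine Or.inr (Or.inr ⟨h0, ?_, ?_⟩)
      · intro v hv
        rcases fin3_cases (f v) with hfv | hfv | hfv
        · exfalso
          obtain ⟨u, hadj, hu2⟩ := hrdf v hfv
          rw [star_adj] at hadj
          have : u = 0 := by tauto
          rw [this, h0] at hu2
          exact absurd hu2 (by decide)
        · exact Or.inl hfv
        · exact Or.inr hfv
      · intro hall
        obtain ⟨u, hadj, hu2⟩ := hrdf 0 h0
        rw [star_adj] at hadj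
        have hu : u ≠ 0 := fun h => hadj.1 h.symm
        rw [hall u hu] at hu2
        exact absurd hu2 (by decide)
    · -- f 0 = 1 : case 2
      refine Or.inr (Or.inl ?_)
      have hleaf : ∀ v, v ≠ 0 → f v ≠ 0 := by
        intro v hv hfv
        obtain ⟨u, hadj, hu2⟩ := hrdf v hfv
        rw [star_adj] at hadj
        have : u = 0 := by tauto
        rw [this, h0] at hu2
        exact absurd hu2 (by decide)
      by_cases h2 : ∃ v, v ≠ 0 ∧ f v = 2
      · exfalso
        obtain ⟨w, hw, hw2⟩ := h2
        set g : Fin (n + 1) → Fin 3 := Function.update f 0 0 with hg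
        have hgrdf : IsRDF (starGraph n) g := by
          intro v hv
          by_cases hv0 : v = 0
          · refine ⟨w, ?_, ?_⟩
            · rw [hv0, star_adj]; exact ⟨fun h => hw h.symm, Or.inl rfl⟩
            · rw [hg, Function.update_of_ne hw, hw2]
          · exfalso
            rw [hg, Function.update_of_ne hv0] at hv
            exact hleaf v hv0 hv
        have hpo : POle g f := by
          constructor <;> intro v hv <;> by_cases hv0 : v = 0
          · rw [hv0, hg, Function.update_self] at hv; exact absurd hv (by decide)
          · rw [hg, Function.update_of_ne hv0] at hv; exact hv
          · rw [hv0, hg, Function.update_self] at hv; exact absurd hv (by decide)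
          · rw [hg, Function.update_of_ne hv0] at hv; exact hv
        have := hmin g hgrdf hpo
        have h00 : g 0 = f 0 := by rw [this]
        rw [hg, Function.update_self, h0] at h00
        exact absurd h00 (by decide)
      · push_neg at h2
        intro v
        by_cases hv0 : v = 0
        · rw [hv0, h0]
        · rcases fin3_cases (f v) with h | h | h
          · exact absurd h (hleaf v hv0)
          · exact h
          · exact absurd h (h2 v hv0)
    · -- f 0 = 2 : case 1
      refine Or.inl ⟨h0, ?_⟩
      intro w hw
      by_contra hfw
      set g : Fin (n + 1) → Fin 3 := Function.update f w 0 with hg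
      have hgrdf : IsRDF (starGraph n) g := by
        intro v hv
        refine ⟨0, ?_, ?_⟩
        · rw [star_adj]
          constructor
          · intro hv0
            rw [hv0, hg, Function.update_of_ne (Ne.symm hw), h0] at hv
            exact absurd hv (by decide)
          · exact Or.inr rfl
        · rw [hg, Function.update_of_ne (Ne.symm hw), h0]
      have hpo : POle g f := by
        constructor <;> intro v hv <;> by_cases hvw : v = w
        · rw [hvw, hg, Function.update_self] at hv; exact absurd hv (by decide)
        · rw [hg, Function.update_of_ne hvw] at hv; exact hv
        · rw [hvw, hg, Function.update_self] at hv; exact absurd hv (by decide)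
        · rw [hg, Function.update_of_ne hvw] at hv; exact hv
      have := hmin g hgrdf hpo
      have hww : g w = f w := by rw [this]
      rw [hg, Function.update_self] at hww
      exact hfw hww.symm
  · rintro (⟨h0, hl⟩ | hall | ⟨h0, hl, hne⟩)
    · -- f 0 = 2, leaves 0
      constructor
      · intro v hv
        have hv0 : v ≠ 0 := by
          intro h; rw [h, h0] at hv; exact absurd hv (by decide)
        exact ⟨0, by rw [star_adj]; exact ⟨hv0, Or.inr rfl⟩, h0⟩
      · intro g hgrdf ⟨hpo1, hpo2⟩
        have hgl : ∀ v, v ≠ 0 → g v = 0 := by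
          intro v hv
          rcases fin3_cases (g v) with h | h | h
          · exact h
          · exfalso; have h1 := hpo1 v h; rw [hl v hv] at h1; exact absurd h1 (by decide)
          · have := hpo2 v h; rw [hl v hv] at this; exact absurd this (by decide)
        have hg0 : g 0 = 2 := by
          rcases fin3_cases (g 0) with h | h | h
          · exfalso
            obtain ⟨u, hadj, hu2⟩ := hgrdf 0 h
            rw [star_adj] at hadj
            have hu : u ≠ 0 := fun hh => hadj.1 hh.symm
            rw [hgl u hu] at hu2
            exact absurd hu2 (by decide)
          · have := hpo1 0 h; rw [h0] at this; exact absurd this (by decide)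
          · exact h
        funext v
        by_cases hv : v = 0
        · rw [hv, hg0, h0]
        · rw [hgl v hv, hl v hv]
    · -- constant 1
      constructor
      · intro v hv; rw [hall v] at hv; exact absurd hv (by decide)
      · intro g hgrdf ⟨hpo1, hpo2⟩
        funext v
        rcases fin3_cases (g v) with h | h | h
        · exfalso
          obtain ⟨u, _, hu2⟩ := hgrdf v h
          have := hpo2 u hu2
          rw [hall u] at this
          exact absurd this (by decide)
        · rw [h, hall v]
        · have := hpo2 v h; rw [hall v] at this; exact absurd this (by decide)
    · -- f 0 = 0, leaves in {1,2}, some leaf = 2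
      have h2 : ∃ w, w ≠ 0 ∧ f w = 2 := by
        by_contra hc
        push_neg at hc
        apply hne
        intro v hv
        rcases hl v hv with h | h
        · exact h
        · exact absurd h (hc v hv)
      obtain ⟨w, hw0, hw2⟩ := h2
      constructor
      · intro v hv
        have hv0 : v = 0 := by
          by_contra hc
          rcases hl v hc with h | h <;> rw [h] at hv <;> exact absurd hv (by decide)
        exact ⟨w, by rw [hv0, star_adj]; exact ⟨fun h => hw0 h.symm, Or.inl rfl⟩, hw2⟩
      · intro g hgrdf ⟨hpo1, hpo2⟩
        have hg0 : g 0 = 0 := by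
          rcases fin3_cases (g 0) with h | h | h
          · exact h
          · have := hpo1 0 h; rw [h0] at this; exact absurd this (by decide)
          · have := hpo2 0 h; rw [h0] at this; exact absurd this (by decide)
        funext v
        by_cases hv : v = 0
        · rw [hv, hg0, h0]
        · rcases fin3_cases (g v) with h | h | h
          · exfalso
            obtain ⟨u, hadj, hu2⟩ := hgrdf v h
            rw [star_adj] at hadj
            have : u = 0 := by tauto
            rw [this, hg0] at hu2
            exact absurd hu2 (by decide)
          · rw [h, hpo1 v h]
          · rw [h, hpo2 v h]

/-- Encoding of the leaves-only functions. -/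
def starEnc (n : ℕ) (h : Fin n → Fin 2) : Fin (n + 1) → Fin 3 :=
  fun v => Fin.cases 0 (fun i => (h i).succ) v

lemma starEnc_injective (n : ℕ) : Function.Injective (starEnc n) := by
  intro h h' heq
  funext i
  have : starEnc n h i.succ = starEnc n h' i.succ := by rw [heq]
  simp only [starEnc, Fin.cases_succ] at this
  exact Fin.succ_injective _ this

theorem stmt_16 (n : ℕ) (hn : 1 ≤ n) :
    {f : Fin (n + 1) → Fin 3 | IsPOMinimalRDF (starGraph n) f}.ncard = 2 ^ n + 1 ∧
    (∀ f : Fin (n + 1) → Fin 3, IsPOMinimalRDF (starGraph n) f ↔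
      ((f 0 = 2 ∧ ∀ v, v ≠ 0 → f v = 0) ∨
       (∀ v, f v = 1) ∨
       (f 0 = 0 ∧ (∀ v, v ≠ 0 → f v = 1 ∨ f v = 2) ∧ ¬ (∀ v, v ≠ 0 → f v = 1)))) := by
  refine ⟨?_, star_char n⟩
  set f1 : Fin (n + 1) → Fin 3 := fun v => if v = 0 then 2 else 0 with hf1
  set f2 : Fin (n + 1) → Fin 3 := fun _ => 1 with hf2
  set T : Set (Fin n → Fin 2) := {h | ¬ ∀ i, h i = 0} with hT
  have hset : {f : Fin (n + 1) → Fin 3 | IsPOMinimalRDF (starGraph n) f} =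
      insert f1 (insert f2 (starEnc n '' T)) := by
    ext f
    rw [Set.mem_setOf_eq, star_char n f]
    constructor
    · rintro (⟨h0, hl⟩ | hall | ⟨h0, hl, hne⟩)
      · left
        funext v
        by_cases hv : v = 0
        · rw [hv, h0, hf1]; simp
        · rw [hl v hv, hf1]; simp [hv]
      · right; left
        funext v
        rw [hall v, hf2]
      · right; right
        refine ⟨fun i => if f i.succ = 1 then 0 else 1, ?_, ?_⟩
        · rw [hT, Set.mem_setOf_eq]
          intro hc
          apply hne
          intro v hv
          rcases Fin.eq_zero_or_eq_succ v with h | ⟨j, hj⟩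
          · exact absurd h hv
          · have := hc j
            by_contra hne1
            rw [hj] at hne1
            simp only [if_neg hne1] at this
            exact absurd this (by decide)
        · funext v
          rcases Fin.eq_zero_or_eq_succ v with h | ⟨j, hj⟩
          · rw [h]; simpa [starEnc] using h0.symm
          · rw [hj]
            simp only [starEnc, Fin.cases_succ]
            rcases hl v (by rw [hj]; exact Fin.succ_ne_zero j) with h | h <;>
              rw [hj] at h <;> rw [h] <;> simp [h] <;> decide
    · rintro (rfl | rfl | ⟨h, hhT, rfl⟩)
      · exact Or.inl ⟨by simp [hf1], fun v hv => by simp [hf1, hv]⟩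
      · exact Or.inr (Or.inl fun v => rfl)
      · right; right
        refine ⟨by simp [starEnc], ?_, ?_⟩
        · intro v hv
          rcases Fin.eq_zero_or_eq_succ v with h' | ⟨j, hj⟩
          · exact absurd h' hv
          · rw [hj]
            simp only [starEnc, Fin.cases_succ]
            rcases fin2_cases (h j) with hh | hh <;> rw [hh]
            · left; decide
            · right; decide
        · intro hc
          rw [hT, Set.mem_setOf_eq] at hhT
          apply hhT
          intro i
          have := hc i.succ (Fin.succ_ne_zero i)
          simp only [starEnc, Fin.cases_succ] at this
          rcases fin2_cases (h i) with hh | hh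
          · exact hh
          · rw [hh] at this; exact absurd this (by decide)
  rw [hset]
  have hf1ne : f1 ∉ insert f2 (starEnc n '' T) := by
    intro hc
    rcases hc with hc | ⟨h, _, hc⟩
    · have : f1 0 = f2 0 := by rw [hc]
      simp [hf1, hf2] at this
    · have : starEnc n h 0 = f1 0 := by rw [hc]
      simp [starEnc, hf1] at this
  have hf2ne : f2 ∉ starEnc n '' T := by
    rintro ⟨h, _, hc⟩
    have : starEnc n h 0 = f2 0 := by rw [hc]
    simp [starEnc, hf2] at this
  have hTcard : T.ncard = 2 ^ n - 1 := by
    have hTeq : T = ({fun _ => 0} : Set (Fin n → Fin 2))ᶜ := by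
      ext h
      simp [hT, funext_iff]
    rw [hTeq, Set.compl_eq_univ_diff, Set.ncard_diff_singleton_of_mem (Set.mem_univ _),
      Set.ncard_univ, Nat.card_eq_fintype_card, Fintype.card_fun, Fintype.card_fin,
      Fintype.card_fin]
  rw [Set.ncard_insert_of_notMem hf1ne, Set.ncard_insert_of_notMem hf2ne,
    Set.ncard_image_of_injective T (starEnc_injective n), hTcard]
  have : 1 ≤ 2 ^ n := Nat.one_le_two_pow
  omega
end
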